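/- Let F_e : 2^V → ℝ_+ (e ∈ E) be nonnegative submodular with F_e(∅)=F_e(V)=0 and Lovász extensions f_e, and let b ∈ ℝ^V. Consider the primal problem min_{x,η} (1/2)‖η‖² − ⟨b,x⟩ subject to f_e(x) ≤ η(e) for all e, and the dual problem min_{φ ≥ 0} (1/2)‖φ‖² subject to Σ_e φ(e) F_e(X) ≥ b(X) for all X ⊆ V. If (x*, η*) is primal optimal and φ* is dual optimal, then φ*(e) = f_e(x*) = η*(e) for every e ∈ E, and the optimal values satisfy (1/2)‖η*‖² − ⟨b, x*⟩ = −(1/2)‖φ*‖². -/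

import Mathlib

/-!
Optimality of `(x*, η*)` is used only through first-order conditions along feasible directions.
Translating `x*` by a constant leaves every `f_e` unchanged (as `F_e(V) = 0`), so `b(V) = 0`;
shrinking `(x*, η*)` towards `0` gives `‖η*‖² ≤ ⟨b, x*⟩`; moving along `(1_X, (F_e(X))_e)`
gives `b(X) ≤ Σ_e η*(e) F_e(X)`, so `η*` is dual feasible and `‖φ*‖ ≤ ‖η*‖`.
In the other direction, sorting `x*` decreasingly, the greedy vectors `w_e ∈ B(F_e)` and Abel
summation give weak duality `⟨b, x*⟩ ≤ Σ_e φ*(e) f_e(x*) ≤ ⟨φ*, η*⟩`.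
Together `‖φ*‖² + ‖η*‖² ≤ 2⟨φ*, η*⟩`, so `φ* = η*`; and `η* = f(x*)` because lowering `η*`
to `f(x*)` stays feasible.
-/

open Finset Filter Topology

theorem sum_range_mul_sub_nonneg {u d : ℕ → ℝ} {n : ℕ}
    (hu : ∀ k, k + 1 < n → u (k + 1) ≤ u k) (hd : ∀ k, 0 ≤ d k) (hd0 : d 0 = 0)
    (hdn : d n = 0) : 0 ≤ ∑ k ∈ range n, u k * (d (k + 1) - d k) := by
  have := sum_range_by_parts u (fun k => d (k + 1) - d k) n
  simp only [smul_eq_mul, sum_range_sub, hd0, sub_zero, hdn, mul_zero, zero_sub] at this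
  rw [this, neg_nonneg]
  refine sum_nonpos fun k hk => mul_nonpos_of_nonpos_of_nonneg ?_ (hd _)
  exact sub_nonpos.2 (hu k (by rw [mem_range] at hk; omega))

theorem nonneg_of_forall_mul_add_mul_sq_nonneg {α β : ℝ}
    (h : ∀ s, 0 < s → s < 1 → 0 ≤ α * s + β * s ^ 2) : 0 ≤ α := by
  have hlim : Tendsto (fun s => α + β * s) (𝓝[>] 0) (𝓝 α) := by
    have : Continuous fun s : ℝ => α + β * s := by fun_prop
    simpa using (this.tendsto 0).mono_left nhdsWithin_le_nhds
  refine ge_of_tendsto hlim ?_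
  filter_upwards [Ioo_mem_nhdsGT one_pos] with s hs
  have := h s hs.1 hs.2
  nlinarith [hs.1]

theorem exists_equiv_fin_antitone {V : Type*} [Fintype V] (x : V → ℝ) :
    ∃ τ : Fin (Fintype.card V) ≃ V, Antitone (x ∘ τ) := by
  let e := (Fintype.equivFin V).symm
  let g := OrderDual.toDual ∘ x ∘ e
  exact ⟨(Tuple.sort g).trans e, monotone_toDual_comp_iff.1 (Tuple.monotone_sort g)⟩

theorem eq_of_sum_sq_add_sum_sq_le {E : Type*} [Fintype E] {φ η : E → ℝ}
    (h : ∑ e, φ e ^ 2 + ∑ e, η e ^ 2 ≤ 2 * ∑ e, φ e * η e) : φ = η := by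
  have hsum : ∑ e, (φ e - η e) ^ 2 = 0 := by
    refine le_antisymm ?_ (sum_nonneg fun e _ => sq_nonneg _)
    have : ∑ e, (φ e - η e) ^ 2 = ∑ e, φ e ^ 2 + ∑ e, η e ^ 2 - 2 * ∑ e, φ e * η e := by
      simp only [sub_sq, sum_add_distrib, sum_sub_distrib, mul_sum, mul_assoc]; ring
    linarith
  funext e
  have := (sum_eq_zero_iff_of_nonneg fun e _ => sq_nonneg (φ e - η e)).1 hsum e (mem_univ e)
  exact sub_eq_zero.1 (pow_eq_zero_iff two_ne_zero |>.1 this)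

section BasePolytope

variable {V : Type*} [Fintype V]

def basePolytope (F : Finset V → ℝ) : Set (V → ℝ) :=
  {w | (∀ S : Finset V, ∑ v ∈ S, w v ≤ F S) ∧ ∑ v, w v = F univ}

def basePolytopeValues (F : Finset V → ℝ) (x : V → ℝ) : Set ℝ :=
  {r | ∃ w ∈ basePolytope F, r = x ⬝ᵥ w}

variable {F : Finset V → ℝ} {x : V → ℝ} {r r' : ℝ}

theorem nonneg_of_isGreatest_basePolytopeValues (hF : ∀ S, 0 ≤ F S) (hV : F univ = 0)
    (hr : IsGreatest (basePolytopeValues F x) r) : 0 ≤ r :=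
  hr.2 ⟨0, ⟨fun S => by simpa using hF S, by simpa using hV.symm⟩, by simp⟩

theorem le_of_isGreatest_basePolytopeValues_add_const (hV : F univ = 0) (c : ℝ)
    (hr : IsGreatest (basePolytopeValues F x) r)
    (hr' : IsGreatest (basePolytopeValues F (x + c • 1)) r') : r' ≤ r := by
  obtain ⟨w, hw, rfl⟩ := hr'.1
  rw [add_dotProduct, smul_dotProduct, one_dotProduct, hw.2, hV, smul_zero, add_zero]
  exact hr.2 ⟨w, hw, rfl⟩

theorem le_of_isGreatest_basePolytopeValues_smul {t : ℝ} (ht : 0 ≤ t)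
    (hr : IsGreatest (basePolytopeValues F x) r)
    (hr' : IsGreatest (basePolytopeValues F (t • x)) r') : r' ≤ t * r := by
  obtain ⟨w, hw, rfl⟩ := hr'.1
  rw [smul_dotProduct, smul_eq_mul]
  exact mul_le_mul_of_nonneg_left (hr.2 ⟨w, hw, rfl⟩) ht

theorem indicator_one_dotProduct [DecidableEq V] (X : Finset V) (w : V → ℝ) :
    (X : Set V).indicator 1 ⬝ᵥ w = ∑ v ∈ X, w v := by
  simp [dotProduct, Set.indicator_apply, ite_mul, sum_ite_mem]

theorem le_of_isGreatest_basePolytopeValues_add_indicator [DecidableEq V] {s : ℝ} (hs : 0 ≤ s)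
    (X : Finset V) (hr : IsGreatest (basePolytopeValues F x) r)
    (hr' : IsGreatest (basePolytopeValues F (x + s • (X : Set V).indicator 1)) r') :
    r' ≤ r + s * F X := by
  obtain ⟨w, hw, rfl⟩ := hr'.1
  rw [add_dotProduct, smul_dotProduct, indicator_one_dotProduct, smul_eq_mul]
  exact add_le_add (hr.2 ⟨w, hw, rfl⟩) (mul_le_mul_of_nonneg_left (hw.1 X) hs)

end BasePolytope

section Greedy

variable {V : Type*} [Fintype V] {n : ℕ} (τ : Fin n ≃ V)

def prefixSet (k : ℕ) : Finset V := univ.filter fun v => (τ.symm v : ℕ) < k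

theorem mem_prefixSet {k : ℕ} {v : V} : v ∈ prefixSet τ k ↔ (τ.symm v : ℕ) < k := by
  simp [prefixSet]

theorem prefixSet_zero : prefixSet τ 0 = ∅ := by
  simp [prefixSet]

theorem prefixSet_card : prefixSet τ n = univ := by
  simp [prefixSet]

theorem apply_notMem_prefixSet (i : Fin n) : τ i ∉ prefixSet τ i := by
  simp [mem_prefixSet]

def greedyVector (G : Finset V → ℝ) (v : V) : ℝ :=
  G (prefixSet τ (τ.symm v + 1)) - G (prefixSet τ (τ.symm v))

theorem greedyVector_apply (G : Finset V → ℝ) (i : Fin n) :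
    greedyVector τ G (τ i) = G (prefixSet τ (i + 1)) - G (prefixSet τ i) := by
  simp [greedyVector]

theorem sum_mul_greedyVector (x : V → ℝ) (G : Finset V → ℝ) :
    ∑ v, x v * greedyVector τ G v =
      ∑ i : Fin n, x (τ i) * (G (prefixSet τ (i + 1)) - G (prefixSet τ i)) := by
  rw [← τ.sum_comp]
  simp only [greedyVector_apply]

theorem sum_greedyVector (G : Finset V → ℝ) : ∑ v, greedyVector τ G v = G univ - G ∅ := by
  rw [← τ.sum_comp]
  simp only [greedyVector_apply]
  rw [Fin.sum_univ_eq_sum_range (fun k => G (prefixSet τ (k + 1)) - G (prefixSet τ k)),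
    sum_range_sub (fun k => G (prefixSet τ k)), prefixSet_card, prefixSet_zero]

variable {τ} in
theorem sum_mul_greedyVector_nonneg {x : V → ℝ} (hx : Antitone (x ∘ τ)) {G : Finset V → ℝ}
    (hG : ∀ X, 0 ≤ G X) (h0 : G ∅ = 0) (hV : G univ = 0) :
    0 ≤ ∑ v, x v * greedyVector τ G v := by
  let u : ℕ → ℝ := fun k => if hk : k < n then x (τ ⟨k, hk⟩) else 0
  have hu : ∀ k, k + 1 < n → u (k + 1) ≤ u k := fun k hk => by
    simp only [u, dif_pos hk, dif_pos (Nat.lt_of_succ_lt hk)]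
    exact hx (Fin.mk_le_mk.2 k.le_succ)
  have hsum : ∑ v, x v * greedyVector τ G v =
      ∑ k ∈ range n, u k * (G (prefixSet τ (k + 1)) - G (prefixSet τ k)) := by
    rw [sum_mul_greedyVector, ← Fin.sum_univ_eq_sum_range
      (fun k => u k * (G (prefixSet τ (k + 1)) - G (prefixSet τ k)))]
    simp [u]
  rw [hsum]
  exact sum_range_mul_sub_nonneg hu (fun k => hG _) (by rw [prefixSet_zero, h0])
    (by rw [prefixSet_card, hV])

variable [DecidableEq V]

theorem prefixSet_succ (i : Fin n) : prefixSet τ (i + 1) = insert (τ i) (prefixSet τ i) := by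
  ext v
  rw [mem_insert, mem_prefixSet, mem_prefixSet, Nat.lt_succ_iff_lt_or_eq, or_comm,
    ← Fin.ext_iff, Equiv.symm_apply_eq, eq_comm]

theorem greedyVector_modular (b : V → ℝ) :
    greedyVector τ (fun X => ∑ v ∈ X, b v) = b := by
  funext v
  obtain ⟨i, rfl⟩ := τ.surjective v
  rw [greedyVector_apply, prefixSet_succ, sum_insert (apply_notMem_prefixSet τ i),
    add_sub_cancel_right]

variable {τ}

theorem sum_inter_prefixSet_greedyVector_le {G : Finset V → ℝ}
    (hsub : ∀ S T, G (S ∪ T) + G (S ∩ T) ≤ G S + G T) (h0 : G ∅ = 0) (T : Finset V) :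
    ∀ k ≤ n, ∑ v ∈ T ∩ prefixSet τ k, greedyVector τ G v ≤ G (T ∩ prefixSet τ k) := by
  intro k
  induction k with
  | zero => simp [prefixSet_zero, h0]
  | succ k ih =>
    intro hk
    have hP := prefixSet_succ τ ⟨k, hk⟩
    have hnot := apply_notMem_prefixSet τ ⟨k, hk⟩
    simp only at hP hnot
    by_cases hT : τ ⟨k, hk⟩ ∈ T
    · have hsubk := hsub (T ∩ prefixSet τ (k + 1)) (prefixSet τ k)
      rw [hP, inter_insert_of_mem hT, insert_union, union_eq_right.2 inter_subset_right,
        insert_inter_of_notMem hnot, inter_assoc, inter_self] at hsubk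
      have hw : greedyVector τ G (τ ⟨k, hk⟩) = G (prefixSet τ (k + 1)) - G (prefixSet τ k) :=
        greedyVector_apply τ G ⟨k, hk⟩
      rw [hP, inter_insert_of_mem hT, sum_insert fun h => hnot (mem_of_mem_inter_right h), hw, hP]
      linarith [ih (Nat.le_of_succ_le hk)]
    · rw [hP, inter_insert_of_notMem hT]
      exact ih (Nat.le_of_succ_le hk)

theorem greedyVector_mem_basePolytope {G : Finset V → ℝ}
    (hsub : ∀ S T, G (S ∪ T) + G (S ∩ T) ≤ G S + G T) (h0 : G ∅ = 0) :
    greedyVector τ G ∈ basePolytope G := by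
  refine ⟨fun T => ?_, by rw [sum_greedyVector, h0, sub_zero]⟩
  simpa [prefixSet_card] using sum_inter_prefixSet_greedyVector_le hsub h0 T n le_rfl

end Greedy

section Duality

variable {V E : Type*} [Fintype V] [Fintype E]

noncomputable def primalObjective (b x : V → ℝ) (η : E → ℝ) : ℝ := 2⁻¹ * ∑ e, η e ^ 2 - b ⬝ᵥ x

def IsPrimalOptimal (f : E → (V → ℝ) → ℝ) (b xs : V → ℝ) (ηs : E → ℝ) : Prop :=
  (∀ e, f e xs ≤ ηs e) ∧
    ∀ x η, (∀ e, f e x ≤ η e) → primalObjective b xs ηs ≤ primalObjective b x η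

def IsDualFeasible (F : E → Finset V → ℝ) (b : V → ℝ) (φ : E → ℝ) : Prop :=
  (∀ e, 0 ≤ φ e) ∧ ∀ X : Finset V, ∑ v ∈ X, b v ≤ ∑ e, φ e * F e X

variable {F : E → Finset V → ℝ} {f : E → (V → ℝ) → ℝ} {b xs : V → ℝ} {ηs : E → ℝ}

namespace IsPrimalOptimal

theorem apply_eq (h : IsPrimalOptimal f b xs ηs) (hf : ∀ e, 0 ≤ f e xs) (e : E) :
    f e xs = ηs e := by
  have hle : ∑ e, ηs e ^ 2 ≤ ∑ e, f e xs ^ 2 := by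
    have := h.2 xs (fun e => f e xs) fun _ => le_rfl
    simp only [primalObjective] at this
    linarith
  have hsq : ∀ e ∈ univ, f e xs ^ 2 ≤ ηs e ^ 2 := fun e _ => pow_le_pow_left₀ (hf e) (h.1 e) 2
  have := (sum_eq_sum_iff_of_le hsq).1 (le_antisymm (sum_le_sum hsq) hle) e (mem_univ e)
  exact (sq_eq_sq₀ (hf e) ((hf e).trans (h.1 e))).1 this

theorem sum_eq_zero (h : IsPrimalOptimal f b xs ηs) (hV : ∀ e, F e univ = 0)
    (hf : ∀ e x, IsGreatest (basePolytopeValues (F e) x) (f e x)) : ∑ v, b v = 0 := by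
  have key : ∀ c : ℝ, c * ∑ v, b v ≤ 0 := by
    intro c
    have := h.2 (xs + c • 1) ηs fun e =>
      (le_of_isGreatest_basePolytopeValues_add_const (hV e) c (hf e xs) (hf e _)).trans (h.1 e)
    simp only [primalObjective, dotProduct_add, dotProduct_smul, dotProduct_one,
      smul_eq_mul] at this
    linarith
  exact mul_self_eq_zero.1 (le_antisymm (key _) (mul_self_nonneg _))

theorem sum_sq_le (h : IsPrimalOptimal f b xs ηs)
    (hf : ∀ e x, IsGreatest (basePolytopeValues (F e) x) (f e x)) :
    ∑ e, ηs e ^ 2 ≤ b ⬝ᵥ xs := by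
  rw [← sub_nonneg]
  refine nonneg_of_forall_mul_add_mul_sq_nonneg (β := 2⁻¹ * ∑ e, ηs e ^ 2) fun s _ hs1 => ?_
  have ht : 0 ≤ 1 - s := by linarith
  have := h.2 ((1 - s) • xs) ((1 - s) • ηs) fun e =>
    (le_of_isGreatest_basePolytopeValues_smul ht (hf e xs) (hf e _)).trans
      (mul_le_mul_of_nonneg_left (h.1 e) ht)
  simp only [primalObjective, dotProduct_smul, Pi.smul_apply, smul_eq_mul, mul_pow,
    ← mul_sum] at this
  linear_combination this

theorem isDualFeasible [DecidableEq V] (h : IsPrimalOptimal f b xs ηs)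
    (hf : ∀ e x, IsGreatest (basePolytopeValues (F e) x) (f e x)) (hfnn : ∀ e, 0 ≤ f e xs) :
    IsDualFeasible F b ηs := by
  refine ⟨fun e => (hfnn e).trans (h.1 e), fun X => sub_nonneg.1 ?_⟩
  refine nonneg_of_forall_mul_add_mul_sq_nonneg (β := 2⁻¹ * ∑ e, F e X ^ 2)
    fun s hs _ => ?_
  have := h.2 (xs + s • (X : Set V).indicator 1) (ηs + s • fun e => F e X) fun e =>
    (le_of_isGreatest_basePolytopeValues_add_indicator hs.le X (hf e xs) (hf e _)).trans
      (by simpa using h.1 e)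
  have hsq : ∑ e, (ηs + s • fun e => F e X) e ^ 2 =
      ∑ e, ηs e ^ 2 + 2 * s * ∑ e, ηs e * F e X + s ^ 2 * ∑ e, F e X ^ 2 := by
    rw [mul_sum, mul_sum, ← sum_add_distrib, ← sum_add_distrib]
    exact sum_congr rfl fun e _ => by simp only [Pi.add_apply, Pi.smul_apply, smul_eq_mul]; ring
  rw [primalObjective, primalObjective, hsq, dotProduct_add, dotProduct_smul, smul_eq_mul,
    dotProduct_comm b ((X : Set V).indicator 1), indicator_one_dotProduct] at this
  linear_combination this

end IsPrimalOptimal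

theorem IsDualFeasible.dotProduct_le [DecidableEq V] {φ : E → ℝ} (hφ : IsDualFeasible F b φ)
    (hsub : ∀ e S T, F e (S ∪ T) + F e (S ∩ T) ≤ F e S + F e T)
    (h0 : ∀ e, F e ∅ = 0) (hV : ∀ e, F e univ = 0)
    (hf : ∀ e x, IsGreatest (basePolytopeValues (F e) x) (f e x)) (hb : ∑ v, b v = 0)
    (x : V → ℝ) : b ⬝ᵥ x ≤ ∑ e, φ e * f e x := by
  obtain ⟨τ, hτ⟩ := exists_equiv_fin_antitone x
  let G : Finset V → ℝ := fun X => ∑ e, φ e * F e X - ∑ v ∈ X, b v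
  have hG : 0 ≤ ∑ v, x v * greedyVector τ G v :=
    sum_mul_greedyVector_nonneg hτ (fun X => sub_nonneg.2 (hφ.2 X)) (by simp [G, h0])
      (by simp [G, hV, hb])
  have hGw : ∀ v, greedyVector τ G v = ∑ e, φ e * greedyVector τ (F e) v - b v := by
    intro v
    rw [← congrFun (greedyVector_modular τ b) v]
    simp only [G, greedyVector, mul_sub, sum_sub_distrib]
    ring
  calc b ⬝ᵥ x = ∑ v, x v * b v := dotProduct_comm b x
    _ ≤ ∑ v, x v * ∑ e, φ e * greedyVector τ (F e) v := by
      simp only [hGw, mul_sub, sum_sub_distrib] at hG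
      linarith
    _ = ∑ e, φ e * ∑ v, x v * greedyVector τ (F e) v := by
      simp only [mul_sum]
      rw [sum_comm]
      exact sum_congr rfl fun e _ => sum_congr rfl fun v _ => mul_left_comm _ _ _
    _ ≤ ∑ e, φ e * f e x := sum_le_sum fun e _ => mul_le_mul_of_nonneg_left
      ((hf e x).2 ⟨_, greedyVector_mem_basePolytope (hsub e) (h0 e), rfl⟩) (hφ.1 e)

end Duality

/-- Strong duality and complementary slackness between the primal problem
`min (1/2)‖η‖² − ⟨b,x⟩ s.t. f_e(x) ≤ η(e)` and the dual
`min (1/2)‖φ‖² s.t. Σ_e φ(e)F_e(X) ≥ b(X)`: optimal solutions satisfy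
`φ*(e) = f_e(x*) = η*(e)` and the optimal values are negatives of each other. -/
theorem primal_dual_optimal_relations {V E : Type*} [Fintype V] [DecidableEq V] [Fintype E]
    (F : E → Finset V → ℝ)
    (hsub : ∀ e (S T : Finset V), F e (S ∪ T) + F e (S ∩ T) ≤ F e S + F e T)
    (hnn : ∀ e S, 0 ≤ F e S)
    (h0 : ∀ e, F e ∅ = 0) (hV : ∀ e, F e Finset.univ = 0)
    (f : E → (V → ℝ) → ℝ)
    (hf : ∀ e (x : V → ℝ), IsGreatest
      {r : ℝ | ∃ w : V → ℝ,
        ((∀ S : Finset V, ∑ v ∈ S, w v ≤ F e S) ∧ ∑ v, w v = F e Finset.univ)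
        ∧ r = ∑ v, x v * w v} (f e x))
    (b : V → ℝ) (xs : V → ℝ) (ηs : E → ℝ) (φs : E → ℝ)
    (hpf : ∀ e, f e xs ≤ ηs e)
    (hpopt : ∀ (x : V → ℝ) (η : E → ℝ), (∀ e, f e x ≤ η e) →
      2⁻¹ * (∑ e, (ηs e) ^ 2) - ∑ v, b v * xs v ≤
      2⁻¹ * (∑ e, (η e) ^ 2) - ∑ v, b v * x v)
    (hdf : (∀ e, 0 ≤ φs e) ∧
      ∀ X : Finset V, (∑ x ∈ X, b x) ≤ ∑ e, φs e * F e X)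
    (hdopt : ∀ φ : E → ℝ, ((∀ e, 0 ≤ φ e) ∧
        ∀ X : Finset V, (∑ x ∈ X, b x) ≤ ∑ e, φ e * F e X) →
      2⁻¹ * (∑ e, (φs e) ^ 2) ≤ 2⁻¹ * (∑ e, (φ e) ^ 2)) :
    (∀ e, φs e = f e xs ∧ f e xs = ηs e) ∧
    2⁻¹ * (∑ e, (ηs e) ^ 2) - ∑ v, b v * xs v = -(2⁻¹ * ∑ e, (φs e) ^ 2) := by
  have hopt : IsPrimalOptimal f b xs ηs := ⟨hpf, hpopt⟩
  have hfnn : ∀ e, 0 ≤ f e xs := fun e =>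
    nonneg_of_isGreatest_basePolytopeValues (hnn e) (hV e) (hf e xs)
  have hηs : ∑ e, ηs e ^ 2 ≤ b ⬝ᵥ xs := hopt.sum_sq_le hf
  have hφs : ∑ e, φs e ^ 2 ≤ ∑ e, ηs e ^ 2 := by
    have := hdopt ηs (hopt.isDualFeasible hf hfnn)
    linarith
  have hweak : b ⬝ᵥ xs ≤ ∑ e, φs e * ηs e :=
    (IsDualFeasible.dotProduct_le hdf hsub h0 hV hf (hopt.sum_eq_zero hV hf) xs).trans
      (sum_le_sum fun e _ => mul_le_mul_of_nonneg_left (hpf e) (hdf.1 e))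
  obtain rfl : φs = ηs := eq_of_sum_sq_add_sum_sq_le (by linarith)
  refine ⟨fun e => ⟨(hopt.apply_eq hfnn e).symm, hopt.apply_eq hfnn e⟩, ?_⟩
  have hsq : ∑ e, φs e * φs e = ∑ e, φs e ^ 2 := by simp only [sq]
  change 2⁻¹ * _ - b ⬝ᵥ xs = _
  linarith
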